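/- arXiv:2409.01236 — 2 statements merged into one kernel-verified Lean document; each statement's English description precedes it below -/
import Mathlib

section
/- Let (s_1, …, s_{n+1}) be an exchangeable finite sequence of real-valued random variables, and let α ∈ (0,1) satisfy ⌈(n+1)(1−α)⌉ ≤ n. Let τ be the conformal threshold computed from the calibration scores s_1, …, s_n, i.e. τ = inf{ s ∈ ℝ : #{i ∈ {1,…,n} : s_i ≤ s} ≥ ⌈(n+1)(1−α)⌉ }. Then ℙ(s_{n+1} ≤ τ) ≥ 1 − α. -/
/-! Call a score *low* if fewer than `K = ⌈(n+1)(1-α)⌉` of the scores lie strictly below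
it. A low test score is at most the threshold `τ`, and in every outcome at least `K` of the
`n+1` scores are low. By exchangeability all scores are low with the same probability, which
is therefore at least `K/(n+1) ≥ 1-α`. -/

open MeasureTheory Finset
open scoped ENNReal

section Rank

variable {ι α : Type*} [Fintype ι] [LinearOrder α]

def rankLT (v : ι → α) (j : ι) : ℕ := #{i | v i < v j}

lemma rankLT_comp_perm (v : ι → α) (π : Equiv.Perm ι) (j : ι) :
    rankLT (v ∘ π) j = rankLT v (π j) :=
  card_equiv π (by simp)

lemma le_card_filter_rankLT_lt {K : ℕ} (hK : K ≤ Fintype.card ι) (v : ι → α) :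
    K ≤ #{j | rankLT v j < K} := by
  rcases ({j | K ≤ rankLT v j} : Finset ι).eq_empty_or_nonempty with hnone | hsome
  · have hall : ({j | rankLT v j < K} : Finset ι) = univ :=
      filter_true_of_mem fun j _ => not_le.mp (filter_eq_empty_iff.mp hnone (mem_univ j))
    simpa [hall] using hK
  -- The indices strictly below a `v`-minimal index of rank `≥ K` all have rank `< K`.
  obtain ⟨j₀, hj₀, hmin⟩ := exists_min_image _ v hsome
  have hbelow : ({i | v i < v j₀} : Finset ι) ⊆ ({j | rankLT v j < K} : Finset ι) :=
    fun i hi => by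
      by_contra hi'
      exact (mem_filter.mp hi).2.not_ge (hmin i (by simpa using hi'))
  calc K ≤ rankLT v j₀ := (mem_filter.mp hj₀).2
    _ ≤ #{j | rankLT v j < K} := card_le_card hbelow

lemma measurableSet_setOf_rankLT_lt [MeasurableSpace α] [TopologicalSpace α]
    [OpensMeasurableSpace α] [OrderClosedTopology α] [SecondCountableTopology α]
    (j : ι) (K : ℕ) : MeasurableSet {v : ι → α | rankLT v j < K} := by
  have hrank : Measurable fun v : ι → α => rankLT v j := by
    simp_rw [rankLT, card_filter]
    exact Finset.measurable_sum _ fun i _ =>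
      Measurable.ite (measurableSet_lt (measurable_pi_apply i) (measurable_pi_apply j))
        measurable_const measurable_const
  exact hrank measurableSet_Iio

end Rank

lemma le_sInf_of_rankLT_last_lt {α : Type*} [ConditionallyCompleteLinearOrder α] {n K : ℕ}
    (hKn : K ≤ n) (v : Fin (n + 1) → α) (hv : rankLT v (Fin.last n) < K) :
    v (Fin.last n) ≤ sInf {t | K ≤ #{i : Fin n | v i.castSucc ≤ t}} := by
  obtain ⟨M, hM⟩ := (Set.finite_range v).bddAbove
  refine le_csInf ⟨M, ?_⟩ fun t ht => ?_
  · have hall : ({i : Fin n | v i.castSucc ≤ M} : Finset (Fin n)) = univ :=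
      filter_true_of_mem fun i _ => hM (Set.mem_range_self _)
    simpa [hall] using hKn
  · by_contra! hlt
    have : #{i : Fin n | v i.castSucc ≤ t} ≤ rankLT v (Fin.last n) :=
      card_le_card_of_injOn Fin.castSucc
        (fun i hi => by
          simp only [coe_filter, mem_univ, true_and, Set.mem_ofPred_eq] at hi ⊢
          exact hi.trans_lt hlt)
        (Fin.castSucc_injective n).injOn
    exact absurd (ht.trans this) (not_le.mpr hv)

section Measure

variable {Ω ι : Type*} [MeasurableSpace Ω] {μ : Measure Ω}

lemma natCast_mul_measure_univ_le_sum [Fintype ι] {s : ι → Set Ω}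
    [∀ j, DecidablePred (· ∈ s j)] (hs : ∀ j, MeasurableSet (s j)) {K : ℕ}
    (hK : ∀ ω, K ≤ #{j | ω ∈ s j}) : K * μ Set.univ ≤ ∑ j, μ (s j) := by
  calc K * μ Set.univ = ∫⁻ _, (K : ℝ≥0∞) ∂μ := (lintegral_const _).symm
    _ ≤ ∫⁻ ω, ∑ j, (s j).indicator 1 ω ∂μ :=
      lintegral_mono fun ω => by simpa [Set.indicator_apply] using hK ω
    _ = ∑ j, μ (s j) := by
      rw [lintegral_finsetSum _ fun j _ => measurable_one.indicator (hs j)]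
      simp [lintegral_indicator_one (hs _)]

variable {α : Type*} [MeasurableSpace α]

def Exchangeable (μ : Measure Ω) (X : ι → Ω → α) : Prop :=
  ∀ π : Equiv.Perm ι, μ.map (fun ω i => X (π i) ω) = μ.map (fun ω i => X i ω)

variable {X : ι → Ω → α}

lemma Exchangeable.measure_preimage_perm (hX : Exchangeable μ X) (hmeas : ∀ i, Measurable (X i))
    (π : Equiv.Perm ι) {C : Set (ι → α)} (hC : MeasurableSet C) :
    μ ((fun ω i => X (π i) ω) ⁻¹' C) = μ ((fun ω i => X i ω) ⁻¹' C) := by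
  rw [← Measure.map_apply (by fun_prop) hC, hX π, Measure.map_apply (by fun_prop) hC]

variable [Fintype ι] [LinearOrder α] [TopologicalSpace α] [OpensMeasurableSpace α]
  [OrderClosedTopology α] [SecondCountableTopology α]

lemma Exchangeable.measure_rankLT_lt_eq [DecidableEq ι] (hX : Exchangeable μ X)
    (hmeas : ∀ i, Measurable (X i)) (K : ℕ) (j j' : ι) :
    μ {ω | rankLT (X · ω) j < K} = μ {ω | rankLT (X · ω) j' < K} := by
  have := hX.measure_preimage_perm hmeas (Equiv.swap j j') (measurableSet_setOf_rankLT_lt j' K)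
  have hperm : ∀ ω, rankLT (fun i => X (Equiv.swap j j' i) ω) j' = rankLT (X · ω) j :=
    fun ω => (rankLT_comp_perm (X · ω) _ j').trans (by rw [Equiv.swap_apply_right])
  simpa [Set.preimage, hperm] using this

theorem Exchangeable.le_card_mul_measure_rankLT_lt [IsProbabilityMeasure μ]
    (hX : Exchangeable μ X) (hmeas : ∀ i, Measurable (X i)) {K : ℕ}
    (hK : K ≤ Fintype.card ι) (j : ι) :
    (K : ℝ≥0∞) ≤ Fintype.card ι * μ {ω | rankLT (X · ω) j < K} := by
  classical
  have hmeas_rank : ∀ j', MeasurableSet {ω | rankLT (X · ω) j' < K} := fun j' =>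
    measurable_pi_lambda _ hmeas (measurableSet_setOf_rankLT_lt j' K)
  calc (K : ℝ≥0∞) = K * μ Set.univ := by simp
    _ ≤ ∑ j' : ι, μ {ω | rankLT (X · ω) j' < K} :=
      natCast_mul_measure_univ_le_sum hmeas_rank fun ω => le_card_filter_rankLT_lt hK _
    _ = Fintype.card ι * μ {ω | rankLT (X · ω) j < K} := by
      simp [hX.measure_rankLT_lt_eq hmeas K _ j]

end Measure

theorem conformal_coverage_general
    {Ω : Type*} [MeasurableSpace Ω] (μ : Measure Ω) [IsProbabilityMeasure μ]
    (n : ℕ) (s : Fin (n + 1) → Ω → ℝ)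
    (hmeas : ∀ i, Measurable (s i))
    (hexch : ∀ π : Equiv.Perm (Fin (n + 1)),
      Measure.map (fun ω i => s (π i) ω) μ = Measure.map (fun ω i => s i ω) μ)
    (α : ℝ)
    (hk : ⌈((n : ℝ) + 1) * (1 - α)⌉ ≤ (n : ℤ))
    (τ : Ω → ℝ)
    (hτ : ∀ ω, τ ω = sInf {t : ℝ |
      ⌈((n : ℝ) + 1) * (1 - α)⌉ ≤
        ((Finset.univ.filter fun i : Fin n => s i.castSucc ω ≤ t).card : ℤ)}) :
    ENNReal.ofReal (1 - α) ≤ μ {ω | s (Fin.last n) ω ≤ τ ω} := by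
  rcases le_or_gt (1 - α) 0 with hα | hα
  · simp [ENNReal.ofReal_of_nonpos hα]
  obtain ⟨K, hK⟩ := Int.eq_ofNat_of_zero_le (Int.ceil_nonneg (by positivity) :
    0 ≤ ⌈((n : ℝ) + 1) * (1 - α)⌉)
  have hKn : K ≤ n := by exact_mod_cast hK ▸ hk
  have hceil : ((n : ℝ) + 1) * (1 - α) ≤ K := by exact_mod_cast hK ▸ Int.le_ceil _
  have hcover : {ω | rankLT (s · ω) (Fin.last n) < K} ⊆ {ω | s (Fin.last n) ω ≤ τ ω} :=
    fun ω hω => by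
      simpa only [Set.mem_ofPred_eq, hτ, hK, Nat.cast_le] using
        le_sInf_of_rankLT_last_lt hKn _ hω
  have hmass : (K : ℝ≥0∞) ≤ (n + 1) * μ {ω | rankLT (s · ω) (Fin.last n) < K} := by
    simpa using Exchangeable.le_card_mul_measure_rankLT_lt hexch hmeas
      (by simpa using hKn.trans n.le_succ) (Fin.last n)
  refine le_trans ?_ (measure_mono hcover)
  rw [← ENNReal.mul_le_mul_iff_right (a := n + 1) (by simp) (by simp)]
  calc (n + 1) * ENNReal.ofReal (1 - α) = ENNReal.ofReal ((n + 1) * (1 - α)) := by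
        rw [ENNReal.ofReal_mul (by positivity)]; norm_cast
    _ ≤ K := by simpa using ENNReal.ofReal_le_ofReal hceil
    _ ≤ _ := hmass

/-- Coverage guarantee of split conformal prediction: if the scores
`s 0, …, s n` are exchangeable and `τ` is the conformal threshold computed
from the first `n` (calibration) scores at error rate `α`, then the test
score `s (Fin.last n)` is at most `τ` with probability at least `1 - α`. -/
theorem conformal_coverage
    {Ω : Type*} [MeasurableSpace Ω] (μ : Measure Ω) [IsProbabilityMeasure μ]
    (n : ℕ) (s : Fin (n + 1) → Ω → ℝ)
    (hmeas : ∀ i, Measurable (s i))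
    (hexch : ∀ π : Equiv.Perm (Fin (n + 1)),
      Measure.map (fun ω i => s (π i) ω) μ = Measure.map (fun ω i => s i ω) μ)
    (α : ℝ) (hα : α ∈ Set.Ioo (0 : ℝ) 1)
    (hk : ⌈((n : ℝ) + 1) * (1 - α)⌉ ≤ (n : ℤ))
    (τ : Ω → ℝ)
    (hτ : ∀ ω, τ ω = sInf {t : ℝ |
      ⌈((n : ℝ) + 1) * (1 - α)⌉ ≤
        ((Finset.univ.filter fun i : Fin n => s i.castSucc ω ≤ t).card : ℤ)}) :
    ENNReal.ofReal (1 - α) ≤ μ {ω | s (Fin.last n) ω ≤ τ ω} :=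
  conformal_coverage_general μ n s hmeas hexch α hk τ hτ
end

section
/- Let (s_1, …, s_{n+1}) be an exchangeable sequence of real-valued random variables, let g : ℝ^{n+1} → ℝ^{n+1} be a measurable permutation-equivariant map (g(x ∘ π) = g(x) ∘ π for every permutation π), and set (ŝ_1, …, ŝ_{n+1}) = g(s_1, …, s_{n+1}). Let α ∈ (0,1) satisfy ⌈(n+1)(1−α)⌉ ≤ n and let τ̂ = inf{ s ∈ ℝ : #{i ∈ {1,…,n} : ŝ_i ≤ s} ≥ ⌈(n+1)(1−α)⌉ } be the conformal threshold computed from the aggregated calibration scores ŝ_1,…,ŝ_n. Then ℙ( ŝ_{n+1} ≤ τ̂ ) ≥ 1 − α. -/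
open MeasureTheory Finset
open scoped ENNReal

lemma sacp_thresh_iff {n : ℕ} (k : ℕ) (hk1 : 1 ≤ k) (hk2 : k ≤ n) (c : Fin n → ℝ) (v : ℝ) :
    v ≤ sInf {t : ℝ | k ≤ (univ.filter fun i => c i ≤ t).card} ↔
      (univ.filter fun i => c i < v).card < k := by
  have hn : 0 < n := lt_of_lt_of_le hk1 hk2
  have : Nonempty (Fin n) := ⟨⟨0, hn⟩⟩
  obtain ⟨i₁, -, hi₁⟩ := Finset.exists_max_image (univ : Finset (Fin n)) c ⟨Classical.arbitrary _, mem_univ _⟩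
  have hne : {t : ℝ | k ≤ (univ.filter fun i => c i ≤ t).card}.Nonempty := by
    refine ⟨c i₁, ?_⟩
    have : (univ.filter fun i => c i ≤ c i₁) = univ := by
      ext i; simp [hi₁ i (mem_univ i)]
    simp [this, Finset.card_univ, hk2]
  obtain ⟨i₀, -, hi₀⟩ := Finset.exists_min_image (univ : Finset (Fin n)) c ⟨Classical.arbitrary _, mem_univ _⟩
  have hbdd : BddBelow {t : ℝ | k ≤ (univ.filter fun i => c i ≤ t).card} := by
    refine ⟨c i₀, fun t ht => ?_⟩
    have h1 : 0 < (univ.filter fun i => c i ≤ t).card := lt_of_lt_of_le hk1 ht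
    obtain ⟨i, hi⟩ := Finset.card_pos.mp h1
    have := (mem_filter.mp hi).2
    exact le_trans (hi₀ i (mem_univ i)) this
  constructor
  · intro hv
    by_contra hc
    push_neg at hc
    have hFne : (univ.filter fun i => c i < v).Nonempty :=
      Finset.card_pos.mp (lt_of_lt_of_le hk1 hc)
    obtain ⟨i₂, hi₂mem, hi₂⟩ := Finset.exists_max_image _ c hFne
    have ht : c i₂ ∈ {t : ℝ | k ≤ (univ.filter fun i => c i ≤ t).card} := by
      refine le_trans hc (Finset.card_le_card ?_)
      intro i hi
      simp only [mem_filter, mem_univ, true_and]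
      exact hi₂ i hi
    have hlt : c i₂ < v := (mem_filter.mp hi₂mem).2
    exact absurd (le_trans hv (csInf_le hbdd ht)) (not_le.mpr hlt)
  · intro hc
    refine le_csInf hne fun t ht => ?_
    by_contra h
    push_neg at h
    have : (univ.filter fun i => c i ≤ t) ⊆ (univ.filter fun i => c i < v) := by
      intro i hi
      simp only [mem_filter, mem_univ, true_and] at hi ⊢
      exact lt_of_le_of_lt hi h
    exact absurd (le_trans ht (Finset.card_le_card this)) (not_le.mpr hc)

lemma sacp_count_good {m : ℕ} (k : ℕ) (hk1 : 1 ≤ k) (hk2 : k ≤ m) (x : Fin m → ℝ) :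
    k ≤ (univ.filter fun j => (univ.filter fun i => x i < x j).card < k).card := by
  have hm : 0 < m := lt_of_lt_of_le hk1 hk2
  have : Nonempty (Fin m) := ⟨⟨0, hm⟩⟩
  set J0 : Finset (Fin m) := univ.filter fun j => k ≤ (univ.filter fun i => x i ≤ x j).card with hJ0
  obtain ⟨i₁, -, hi₁⟩ := Finset.exists_max_image (univ : Finset (Fin m)) x ⟨Classical.arbitrary _, mem_univ _⟩
  have hJ0ne : J0.Nonempty := by
    refine ⟨i₁, ?_⟩
    have : (univ.filter fun i => x i ≤ x i₁) = univ := by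
      ext i; simp [hi₁ i (mem_univ i)]
    simp [hJ0, this, Finset.card_univ, hk2]
  obtain ⟨j₀, hj₀mem, hj₀⟩ := Finset.exists_min_image J0 x hJ0ne
  set q := x j₀ with hq
  have h1 : k ≤ (univ.filter fun i => x i ≤ q).card := (mem_filter.mp hj₀mem).2
  have h2 : (univ.filter fun i => x i < q).card < k := by
    by_contra hcon
    push_neg at hcon
    have hFne : (univ.filter fun i => x i < q).Nonempty :=
      Finset.card_pos.mp (lt_of_lt_of_le hk1 hcon)
    obtain ⟨i₂, hi₂mem, hi₂⟩ := Finset.exists_max_image _ x hFne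
    have hmem : i₂ ∈ J0 := by
      simp only [hJ0, mem_filter, mem_univ, true_and]
      refine le_trans hcon (Finset.card_le_card ?_)
      intro i hi
      simp only [mem_filter, mem_univ, true_and]
      exact hi₂ i hi
    exact absurd (mem_filter.mp hi₂mem).2 (not_lt.mpr (hj₀ i₂ hmem))
  refine le_trans h1 (Finset.card_le_card ?_)
  intro j hj
  simp only [mem_filter, mem_univ, true_and] at hj ⊢
  refine lt_of_le_of_lt (Finset.card_le_card ?_) h2
  intro i hi
  simp only [mem_filter, mem_univ, true_and] at hi ⊢
  exact lt_of_lt_of_le hi hj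

lemma sacp_count_castSucc {n : ℕ} (P : Fin (n+1) → Prop) [DecidablePred P]
    (hP : ¬ P (Fin.last n)) :
    (univ.filter P).card = (univ.filter fun i : Fin n => P i.castSucc).card := by
  rw [Finset.card_filter, Finset.card_filter, Fin.sum_univ_castSucc]
  simp [hP]

lemma sacp_count_perm {m : ℕ} (σ : Equiv.Perm (Fin m)) (Q : Fin m → Prop) [DecidablePred Q] :
    (univ.filter fun i => Q (σ i)).card = (univ.filter Q).card := by
  apply Finset.card_bij' (fun i _ => σ i) (fun i _ => σ.symm i) <;> simp

/-- Coverage guarantee of spatial-aware conformal prediction: if the raw scores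
`s 0, …, s n` are exchangeable, `g` is a measurable permutation-equivariant map
and `ŝ = g ∘ s` are the aggregated scores, then the conformal threshold `τ̂`
computed from the aggregated calibration scores `ŝ 0, …, ŝ (n-1)` satisfies
`ℙ(ŝ (n+1) ≤ τ̂) ≥ 1 - α`. -/
theorem sacp_coverage
    {Ω : Type*} [MeasurableSpace Ω] (μ : Measure Ω) [IsProbabilityMeasure μ]
    (n : ℕ) (s : Fin (n + 1) → Ω → ℝ)
    (hmeas : ∀ i, Measurable (s i))
    (hexch : ∀ π : Equiv.Perm (Fin (n + 1)),
      Measure.map (fun ω i => s (π i) ω) μ = Measure.map (fun ω i => s i ω) μ)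
    (g : (Fin (n + 1) → ℝ) → (Fin (n + 1) → ℝ)) (hg : Measurable g)
    (hequiv : ∀ (π : Equiv.Perm (Fin (n + 1))) (x : Fin (n + 1) → ℝ) (i : Fin (n + 1)),
      g (fun j => x (π j)) i = g x (π i))
    (shat : Fin (n + 1) → Ω → ℝ)
    (hshat : ∀ i ω, shat i ω = g (fun j => s j ω) i)
    (α : ℝ) (hα : α ∈ Set.Ioo (0 : ℝ) 1)
    (hk : ⌈((n : ℝ) + 1) * (1 - α)⌉ ≤ (n : ℤ))
    (τ : Ω → ℝ)
    (hτ : ∀ ω, τ ω = sInf {t : ℝ |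
      ⌈((n : ℝ) + 1) * (1 - α)⌉ ≤
        ((Finset.univ.filter fun i : Fin n => shat i.castSucc ω ≤ t).card : ℤ)}) :
    ENNReal.ofReal (1 - α) ≤ μ {ω | shat (Fin.last n) ω ≤ τ ω} := by
  classical
  obtain ⟨hα0, hα1⟩ := hα
  set K : ℤ := ⌈((n : ℝ) + 1) * (1 - α)⌉ with hK
  have hKpos : 0 < K := Int.ceil_pos.mpr (by nlinarith [Nat.cast_nonneg (α := ℝ) n])
  set k : ℕ := K.toNat with hkdef
  have hkK : (k : ℤ) = K := Int.toNat_of_nonneg hKpos.le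
  have hk1 : 1 ≤ k := by omega
  have hk2 : k ≤ n := by omega
  -- the aggregated score vector
  set S : Ω → (Fin (n+1) → ℝ) := fun ω i => s i ω with hS
  have hSmeas : Measurable S := measurable_pi_lambda _ fun i => hmeas i
  set G : Ω → (Fin (n+1) → ℝ) := fun ω => g (S ω) with hGdef
  have hGmeas : Measurable G := hg.comp hSmeas
  have hshatG : ∀ i ω, shat i ω = G ω i := fun i ω => hshat i ω
  -- events
  set B : Fin (n+1) → Set (Fin (n+1) → ℝ) := fun j =>
    {x | (univ.filter fun i => x i < x j).card < k} with hB
  have hBmeas : ∀ j, MeasurableSet (B j) := by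
    intro j
    have hcount : Measurable fun x : Fin (n+1) → ℝ =>
        (univ.filter fun i => x i < x j).card := by
      simp only [Finset.card_filter]
      apply Finset.measurable_sum
      intro i _
      exact Measurable.ite
        (measurableSet_lt (measurable_pi_apply i) (measurable_pi_apply j))
        measurable_const measurable_const
    exact hcount (MeasurableSet.of_discrete (s := Set.Iio k))
  set A : Fin (n+1) → Set Ω := fun j => G ⁻¹' (B j) with hA
  have hAmeas : ∀ j, MeasurableSet (A j) := fun j => hGmeas (hBmeas j)
  have hAmem : ∀ j ω, ω ∈ A j ↔ (univ.filter fun i => G ω i < G ω j).card < k := by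
    intro j ω; simp [hA, hB]
  -- laws of permuted aggregated scores agree
  have hmap : ∀ σ : Equiv.Perm (Fin (n+1)),
      Measure.map (fun ω => g (fun l => s (σ l) ω)) μ = Measure.map G μ := by
    intro σ
    have h1 : (fun ω => g (fun l => s (σ l) ω)) = g ∘ (fun ω l => s (σ l) ω) := rfl
    have h2 : G = g ∘ S := rfl
    rw [h1, h2, ← Measure.map_map hg (measurable_pi_lambda _ fun l => hmeas (σ l)),
        ← Measure.map_map hg hSmeas, hexch σ]
  -- all events have the same probability
  have hAeq : ∀ j, μ (A j) = μ (A (Fin.last n)) := by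
    intro j
    set σ : Equiv.Perm (Fin (n+1)) := Equiv.swap j (Fin.last n) with hσ
    have hσmeas : Measurable fun ω => g (fun l => s (σ l) ω) :=
      hg.comp (measurable_pi_lambda _ fun l => hmeas (σ l))
    have hset : A j = (fun ω => g (fun l => s (σ l) ω)) ⁻¹' (B (Fin.last n)) := by
      ext ω
      have hfun : ∀ i, g (fun l => S ω (σ l)) i = G ω (σ i) := fun i => hequiv σ (S ω) i
      have hfil : (univ.filter fun i =>
          g (fun l => s (σ l) ω) i < g (fun l => s (σ l) ω) (Fin.last n)) =
          univ.filter fun i => G ω (σ i) < G ω j := by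
        apply Finset.filter_congr
        intro i _
        have hlast : σ (Fin.last n) = j := Equiv.swap_apply_right j (Fin.last n)
        simp only [show (fun l => s (σ l) ω) = (fun l => S ω (σ l)) from rfl, hfun, hlast]
      simp only [Set.mem_preimage, hB, Set.mem_setOf_eq, hAmem, hfil]
      rw [sacp_count_perm σ (fun i => G ω i < G ω j)]
    calc μ (A j)
        = Measure.map (fun ω => g (fun l => s (σ l) ω)) μ (B (Fin.last n)) := by
          rw [Measure.map_apply hσmeas (hBmeas _), ← hset]
      _ = Measure.map G μ (B (Fin.last n)) := by rw [hmap σ]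
      _ = μ (A (Fin.last n)) := by rw [Measure.map_apply hGmeas (hBmeas _)]
  -- counting bound
  have hsum : (k : ℝ≥0∞) ≤ ∑ j : Fin (n+1), μ (A j) := by
    have hrw : ∀ j : Fin (n+1), μ (A j) = ∫⁻ ω, (A j).indicator 1 ω ∂μ := fun j =>
      (lintegral_indicator_one (hAmeas j)).symm
    calc (k : ℝ≥0∞) = ∫⁻ _, (k : ℝ≥0∞) ∂μ := by
          simp [lintegral_const]
      _ ≤ ∫⁻ ω, ∑ j : Fin (n+1), (A j).indicator 1 ω ∂μ := by
          apply lintegral_mono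
          intro ω
          have hgood := sacp_count_good k hk1 (hk2.trans n.le_succ) (G ω)
          have hsum_eq : ∑ j : Fin (n+1), (A j).indicator (1 : Ω → ℝ≥0∞) ω =
              ((univ.filter fun j : Fin (n+1) =>
                (univ.filter fun i => G ω i < G ω j).card < k).card : ℝ≥0∞) := by
            rw [Finset.card_filter]
            push_cast
            apply Finset.sum_congr rfl
            intro j _
            by_cases hj : ω ∈ A j
            · rw [if_pos ((hAmem j ω).mp hj)]; simp [Set.indicator_of_mem hj]
            · rw [if_neg (fun hc => hj ((hAmem j ω).mpr hc))]
              simp [Set.indicator_of_notMem hj]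
          show (k : ℝ≥0∞) ≤ ∑ j : Fin (n+1), (A j).indicator 1 ω
          rw [hsum_eq]
          exact_mod_cast hgood
      _ = ∑ j : Fin (n+1), μ (A j) := by
          rw [lintegral_finset_sum _ (fun j _ => measurable_one.indicator (hAmeas j))]
          exact Finset.sum_congr rfl fun j _ => (hrw j).symm
  have hsum' : (k : ℝ≥0∞) ≤ ((n : ℝ≥0∞) + 1) * μ (A (Fin.last n)) := by
    calc (k : ℝ≥0∞) ≤ ∑ j : Fin (n+1), μ (A j) := hsum
      _ = ∑ _j : Fin (n+1), μ (A (Fin.last n)) := Finset.sum_congr rfl fun j _ => hAeq j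
      _ = ((n : ℝ≥0∞) + 1) * μ (A (Fin.last n)) := by
          rw [Finset.sum_const, Finset.card_univ, Fintype.card_fin, nsmul_eq_mul]
          push_cast; ring_nf
  -- identify the coverage event
  have hcov : {ω | shat (Fin.last n) ω ≤ τ ω} = A (Fin.last n) := by
    ext ω
    have hsetτ : {t : ℝ | K ≤
        ((Finset.univ.filter fun i : Fin n => shat i.castSucc ω ≤ t).card : ℤ)} =
        {t : ℝ | k ≤ (univ.filter fun i : Fin n => shat i.castSucc ω ≤ t).card} := by
      ext t
      simp only [Set.mem_setOf_eq, ← hkK, Int.ofNat_le]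
    have hτω : τ ω = sInf {t : ℝ |
        k ≤ (univ.filter fun i : Fin n => shat i.castSucc ω ≤ t).card} := by
      rw [hτ ω, ← hsetτ]
    simp only [Set.mem_setOf_eq, hτω]
    rw [sacp_thresh_iff k hk1 hk2 (fun i => shat i.castSucc ω) (shat (Fin.last n) ω)]
    rw [hAmem]
    have hnotlast : ¬ (G ω (Fin.last n) < G ω (Fin.last n)) := lt_irrefl _
    rw [sacp_count_castSucc (fun i : Fin (n+1) => G ω i < G ω (Fin.last n)) hnotlast]
    have : ∀ i : Fin n, shat i.castSucc ω = G ω i.castSucc := fun i => hshatG _ _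
    have hlast : shat (Fin.last n) ω = G ω (Fin.last n) := hshatG _ _
    simp only [this, hlast]
  rw [hcov]
  -- final arithmetic
  have h1 : ((n : ℝ) + 1) * (1 - α) ≤ (k : ℝ) := by
    have := Int.le_ceil (((n : ℝ) + 1) * (1 - α))
    rw [← hK, ← hkK] at this
    exact_mod_cast this
  have h2 : ((n : ℝ≥0∞) + 1) * ENNReal.ofReal (1 - α) ≤
      ((n : ℝ≥0∞) + 1) * μ (A (Fin.last n)) := by
    refine le_trans ?_ hsum'
    have : ((n : ℝ≥0∞) + 1) * ENNReal.ofReal (1 - α) =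
        ENNReal.ofReal (((n : ℝ) + 1) * (1 - α)) := by
      rw [ENNReal.ofReal_mul (by positivity)]
      congr 1
      rw [ENNReal.ofReal_add (by positivity) zero_le_one]
      simp [ENNReal.ofReal_natCast]
    rw [this]
    calc ENNReal.ofReal (((n : ℝ) + 1) * (1 - α)) ≤ ENNReal.ofReal (k : ℝ) :=
        ENNReal.ofReal_le_ofReal h1
      _ = (k : ℝ≥0∞) := ENNReal.ofReal_natCast k
  have hn0 : ((n : ℝ≥0∞) + 1) ≠ 0 := by simp
  have hninf : ((n : ℝ≥0∞) + 1) ≠ ⊤ := by simp [ENNReal.natCast_ne_top]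
  exact (ENNReal.mul_le_mul_iff_right hn0 hninf).mp h2
end
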